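/- Let (G, σ, p) be a canonical Brascamp–Lieb datum in which G and all G_j are compact Lie groups. Let G_e and (G_j)_e be the identity components of G and G_j, and let φ_j : G_e → (G_j)_e be the restriction of σ_j with codomain (G_j)_e (well defined since continuous homomorphisms map the identity component into the identity component). Then BL(G, σ, p) < ∞ if and only if BL(G_e, φ, p) < ∞, for any choice of Haar measures on the groups involved. -/

import Mathlib

open MeasureTheory ENNReal
open Manifold

noncomputable section

/-- The Brascamp–Lieb constant associated to measures `μ` on `G`, `ν j` on `Gj j`,
maps `σ j : G → Gj j` and exponents `p j ∈ [1, ∞]`: the least `C ∈ [0, ∞]` such that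
`∫⁻ ∏ j, f j (σ j x) ∂μ ≤ C * ∏ j, ‖f j‖_{L^{p j}(ν j)}` for all nonnegative continuous
compactly supported inputs `f j`, with value `∞` if no such finite constant exists. -/
def BLConst {J : Type*} [Fintype J]
    {G : Type*} [TopologicalSpace G] [MeasurableSpace G]
    {Gj : J → Type*} [∀ j, TopologicalSpace (Gj j)] [∀ j, MeasurableSpace (Gj j)]
    (μ : Measure G) (ν : ∀ j, Measure (Gj j))
    (σ : ∀ j, G → Gj j) (p : J → ℝ≥0∞) : ℝ≥0∞ :=
  sInf {C : ℝ≥0∞ | ∀ f : ∀ j, Gj j → ℝ,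
    (∀ j, Continuous (f j)) → (∀ j, HasCompactSupport (f j)) →
    (∀ j, ∀ y, 0 ≤ f j y) →
    ∫⁻ x, ∏ j, ENNReal.ofReal (f j (σ j x)) ∂μ ≤
      C * ∏ j, eLpNorm (f j) (p j) (ν j)}

/-! Identity components of Lie groups are open subgroups, so a test function on `(G_j)_e`
extends by zero to one on `G_j` with the same `L^p` norm, and restricting the integral over `G`
to `G_e` gives `BL(G_e) ≤ BL(G)` for the restricted Haar measures. Conversely, by compactness `G`
is covered by finitely many cosets `g G_e`; on each of them the inequality for `G_e`, applied to
the translates `f_j (σ_j g · _)` restricted to `(G_j)_e`, bounds the integral, so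
`BL(G) ≤ [G : G_e] · BL(G_e)`. Any other Haar measures on the identity components are positive
multiples of the restricted ones, which rescales `BL` by a positive finite factor. -/

open scoped NNReal

section BLBound

variable {J : Type*} [Fintype J] {G : Type*} [MeasurableSpace G]
  {Gj : J → Type*} [∀ j, TopologicalSpace (Gj j)] [∀ j, MeasurableSpace (Gj j)]

def IsBLBound (μ : Measure G) (ν : ∀ j, Measure (Gj j)) (σ : ∀ j, G → Gj j) (p : J → ℝ≥0∞)
    (C : ℝ≥0∞) : Prop :=
  ∀ f : ∀ j, Gj j → ℝ, (∀ j, Continuous (f j)) → (∀ j, HasCompactSupport (f j)) →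
    (∀ j, ∀ y, 0 ≤ f j y) →
    ∫⁻ x, ∏ j, ENNReal.ofReal (f j (σ j x)) ∂μ ≤ C * ∏ j, eLpNorm (f j) (p j) (ν j)

variable {μ : Measure G} {ν : ∀ j, Measure (Gj j)} {σ : ∀ j, G → Gj j} {p : J → ℝ≥0∞}
  {C : ℝ≥0∞}

theorem BLConst_lt_top_iff [TopologicalSpace G] :
    BLConst μ ν σ p < ∞ ↔ ∃ C, IsBLBound μ ν σ p C ∧ C < ∞ :=
  sInf_lt_iff

theorem IsBLBound.smul_measure (hC : IsBLBound μ ν σ p C) (c : ℝ≥0) {d : J → ℝ≥0}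
    (hd : ∀ j, d j ≠ 0) :
    IsBLBound (c • μ) (fun j => d j • ν j) σ p
      (c * C * ∏ j, ((d j ^ (p j).toReal⁻¹ : ℝ≥0) : ℝ≥0∞)⁻¹) := by
  intro f hfc hfs hfnn
  have hnorm : ∀ j, eLpNorm (f j) (p j) (ν j) =
      ((d j ^ (p j).toReal⁻¹ : ℝ≥0) : ℝ≥0∞)⁻¹ * eLpNorm (f j) (p j) (d j • ν j) := by
    intro j
    have hd' : d j ^ (p j).toReal⁻¹ ≠ 0 := (NNReal.rpow_pos (pos_iff_ne_zero.2 (hd j))).ne'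
    rw [eLpNorm_smul_measure_of_ne_zero' (hd j), ENNReal.smul_def, smul_eq_mul,
      ENNReal.inv_mul_cancel_left (ENNReal.coe_ne_zero.2 hd') ENNReal.coe_ne_top]
  calc ∫⁻ x, ∏ j, ENNReal.ofReal (f j (σ j x)) ∂(c • μ)
      = c * ∫⁻ x, ∏ j, ENNReal.ofReal (f j (σ j x)) ∂μ := by
        rw [lintegral_smul_measure, ENNReal.smul_def, smul_eq_mul]
    _ ≤ c * (C * ∏ j, eLpNorm (f j) (p j) (ν j)) := by gcongr; exact hC f hfc hfs hfnn
    _ = _ := by simp_rw [hnorm, Finset.prod_mul_distrib]; ring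

end BLBound

theorem isHaarMeasure_comap_subtype_of_isOpen {G : Type*} [Group G] [TopologicalSpace G]
    [IsTopologicalGroup G] [MeasurableSpace G] [BorelSpace G] (μ : Measure G) [μ.IsHaarMeasure]
    {H : Subgroup G} (hH : IsOpen (H : Set G)) : (μ.comap ((↑) : H → G)).IsHaarMeasure :=
  .comap (mH := inferInstance) μ (f := H.subtype) hH.isOpenEmbedding_subtypeVal

section HaarMeasure

variable {J : Type*} [Fintype J]
  {G : Type*} [Group G] [TopologicalSpace G] [IsTopologicalGroup G] [LocallyCompactSpace G]
  [SecondCountableTopology G] [MeasurableSpace G] [BorelSpace G]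
  {Gj : J → Type*} [∀ j, Group (Gj j)] [∀ j, TopologicalSpace (Gj j)]
  [∀ j, IsTopologicalGroup (Gj j)] [∀ j, LocallyCompactSpace (Gj j)]
  [∀ j, SecondCountableTopology (Gj j)] [∀ j, MeasurableSpace (Gj j)] [∀ j, BorelSpace (Gj j)]
  {σ : ∀ j, G → Gj j} {p : J → ℝ≥0∞}

theorem BLConst_lt_top_of_isHaarMeasure {μ μ' : Measure G} [μ.IsHaarMeasure] [μ'.IsHaarMeasure]
    {ν ν' : ∀ j, Measure (Gj j)} [∀ j, (ν j).IsHaarMeasure] [∀ j, (ν' j).IsHaarMeasure]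
    (h : BLConst μ ν σ p < ∞) : BLConst μ' ν' σ p < ∞ := by
  obtain ⟨C, hC, hC_lt⟩ := BLConst_lt_top_iff.1 h
  have hd : ∀ j, Measure.haarScalarFactor (ν' j) (ν j) ≠ 0 := fun j =>
    (Measure.haarScalarFactor_pos_of_isHaarMeasure _ _).ne'
  have hν' : ν' = fun j => Measure.haarScalarFactor (ν' j) (ν j) • ν j :=
    funext fun j => Measure.isMulLeftInvariant_eq_smul (ν' j) (ν j)
  rw [Measure.isMulLeftInvariant_eq_smul μ' μ, hν', BLConst_lt_top_iff]
  refine ⟨_, hC.smul_measure _ hd, ?_⟩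
  refine ENNReal.mul_lt_top (ENNReal.mul_lt_top ENNReal.coe_lt_top hC_lt)
    (ENNReal.prod_lt_top fun j _ => ENNReal.inv_lt_top.2 ?_)
  exact ENNReal.coe_pos.2 (NNReal.rpow_pos (pos_iff_ne_zero.2 (hd j)))

theorem BLConst_lt_top_iff_of_isHaarMeasure (μ μ' : Measure G) [μ.IsHaarMeasure]
    [μ'.IsHaarMeasure] (ν ν' : ∀ j, Measure (Gj j)) [∀ j, (ν j).IsHaarMeasure]
    [∀ j, (ν' j).IsHaarMeasure] : BLConst μ ν σ p < ∞ ↔ BLConst μ' ν' σ p < ∞ :=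
  ⟨BLConst_lt_top_of_isHaarMeasure, BLConst_lt_top_of_isHaarMeasure⟩

end HaarMeasure

section Subtype

variable {α ε : Type*} [MeasurableSpace α] [TopologicalSpace ε] [ContinuousENorm ε]
  {μ : Measure α} {s : Set α} {p : ℝ≥0∞}

theorem eLpNorm_comp_subtype_val (hs : MeasurableSet s) (g : α → ε) :
    eLpNorm (g ∘ Subtype.val) p (μ.comap (↑) : Measure s) = eLpNorm g p (μ.restrict s) := by
  rw [← map_comap_subtype_coe hs, (MeasurableEmbedding.subtype_coe hs).eLpNorm_map_measure]

theorem eLpNorm_extend_subtype_val (hs : MeasurableSet s) (f : s → ℝ) :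
    eLpNorm (Subtype.val.extend f 0) p μ = eLpNorm f p (μ.comap (↑)) := by
  rw [← eLpNorm_restrict_eq_of_support_subset, ← eLpNorm_comp_subtype_val hs,
    Function.extend_comp Subtype.val_injective]
  exact Function.support_extend_zero_subset.trans (Subtype.coe_image_subset _ _)

end Subtype

section Restriction

variable {J : Type*} [Fintype J] {G : Type*} [MeasurableSpace G]
  {Gj : J → Type*} [∀ j, TopologicalSpace (Gj j)] [∀ j, MeasurableSpace (Gj j)]
  {μ : Measure G} {ν : ∀ j, Measure (Gj j)} {p : J → ℝ≥0∞} {C : ℝ≥0∞}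

theorem IsBLBound.comap_subtype [∀ j, T2Space (Gj j)] [∀ j, OpensMeasurableSpace (Gj j)]
    {σ : ∀ j, G → Gj j} (hC : IsBLBound μ ν σ p C) {s : Set G} (hs : MeasurableSet s)
    {t : ∀ j, Set (Gj j)} (ht : ∀ j, IsOpen (t j)) {φ : ∀ j, s → t j}
    (hφ : ∀ j x, (φ j x : Gj j) = σ j x) :
    IsBLBound (μ.comap (↑)) (fun j => (ν j).comap (↑)) φ p C := by
  intro f hfc hfs hfnn
  set F : ∀ j, Gj j → ℝ := fun j => Subtype.val.extend (f j) 0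
  have hF : ∀ j (y : t j), F j y = f j y := fun j => Subtype.val_injective.extend_apply _ _
  have hF_nonneg : ∀ j y, 0 ≤ F j y := by
    intro j y
    by_cases hy : ∃ z : t j, ↑z = y
    · obtain ⟨z, rfl⟩ := hy
      rw [hF]
      exact hfnn j z
    · simp [F, Function.extend_apply' _ _ _ hy]
  calc ∫⁻ x, ∏ j, ENNReal.ofReal (f j (φ j x)) ∂(μ.comap (↑))
      = ∫⁻ x in s, ∏ j, ENNReal.ofReal (F j (σ j x)) ∂μ := by
        rw [← lintegral_subtype_comap hs]
        simp only [← hφ, hF]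
    _ ≤ ∫⁻ x, ∏ j, ENNReal.ofReal (F j (σ j x)) ∂μ := setLIntegral_le_lintegral _ _
    _ ≤ C * ∏ j, eLpNorm (F j) (p j) (ν j) :=
        hC F (fun j => (hfs j).continuous_extend_zero (ht j) (hfc j))
          (fun j => (hfs j).extend_zero continuous_subtype_val) hF_nonneg
    _ = C * ∏ j, eLpNorm (f j) (p j) ((ν j).comap (↑)) := by
        simp only [F, eLpNorm_extend_subtype_val (ht _).measurableSet]

end Restriction

section Cosets

variable {G : Type*} [Group G]

theorem iUnion_out_mul_image_eq_univ (H : Subgroup G) :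
    ⋃ q : G ⧸ H, (q.out * ·) '' (H : Set G) = Set.univ := by
  refine Set.eq_univ_of_forall fun x => Set.mem_iUnion.2 ⟨x, ?_⟩
  obtain ⟨h, hh⟩ := QuotientGroup.mk_out_eq_mul H x
  exact ⟨(h : G)⁻¹, H.inv_mem h.2, by simp [hh]⟩

theorem lintegral_le_sum_setLIntegral_subgroup [MeasurableSpace G] [MeasurableMul G] {μ : Measure G}
    [μ.IsMulLeftInvariant] (H : Subgroup G) [Fintype (G ⧸ H)] (F : G → ℝ≥0∞) :
    ∫⁻ x, F x ∂μ ≤ ∑ q : G ⧸ H, ∫⁻ x in H, F (q.out * x) ∂μ := by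
  calc ∫⁻ x, F x ∂μ = ∫⁻ x in ⋃ q : G ⧸ H, (q.out * ·) '' (H : Set G), F x ∂μ := by
        rw [iUnion_out_mul_image_eq_univ, Measure.restrict_univ]
    _ ≤ ∑' q : G ⧸ H, ∫⁻ x in (q.out * ·) '' (H : Set G), F x ∂μ := lintegral_iUnion_le _ _
    _ = ∑ q : G ⧸ H, ∫⁻ x in H, F (q.out * x) ∂μ := by
        rw [tsum_fintype]
        refine Finset.sum_congr rfl fun q _ => ?_
        exact ((measurePreserving_mul_left μ q.out).setLIntegral_comp_emb
          (MeasurableEquiv.mulLeft q.out).measurableEmbedding F H).symm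

end Cosets

section Translation

variable {G ε : Type*} [Group G] [MeasurableSpace G] [MeasurableMul G] [TopologicalSpace ε]
  [ContinuousENorm ε] {μ : Measure G} [μ.IsMulLeftInvariant] {p : ℝ≥0∞}

theorem eLpNorm_comp_mul_left (f : G → ε) (a : G) :
    eLpNorm (fun x => f (a * x)) p μ = eLpNorm f p μ := by
  have h := (MeasurableEquiv.mulLeft a).measurableEmbedding.eLpNorm_map_measure (g := f) (p := p)
    (μ := μ)
  rwa [MeasurableEquiv.coe_mulLeft, map_mul_left_eq_self, eq_comm] at h

end Translation

section Subgroups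

variable {J : Type*} [Fintype J] {G : Type*} [Group G] [MeasurableSpace G] [MeasurableMul G]
  {Gj : J → Type*} [∀ j, Group (Gj j)] [∀ j, TopologicalSpace (Gj j)]
  [∀ j, ContinuousMul (Gj j)] [∀ j, MeasurableSpace (Gj j)] [∀ j, MeasurableMul (Gj j)]
  {μ : Measure G} [μ.IsMulLeftInvariant] {ν : ∀ j, Measure (Gj j)}
  [∀ j, (ν j).IsMulLeftInvariant] {σ : ∀ j, G →* Gj j} {p : J → ℝ≥0∞} {C : ℝ≥0∞}
  {H : Subgroup G} {K : ∀ j, Subgroup (Gj j)} {φ : ∀ j, H → K j}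

theorem IsBLBound.of_comap_subgroup [Finite (G ⧸ H)] [∀ j, OpensMeasurableSpace (Gj j)]
    (hH : MeasurableSet (H : Set G)) (hK : ∀ j, IsClosed (K j : Set (Gj j)))
    (hφ : ∀ j x, (φ j x : Gj j) = σ j x)
    (hC : IsBLBound (μ.comap (↑)) (fun j => (ν j).comap (↑)) φ p C) :
    IsBLBound μ ν (fun j => σ j) p (Nat.card (G ⧸ H) * C) := by
  intro f hfc hfs hfnn
  have := Fintype.ofFinite (G ⧸ H)
  have hcoset : ∀ g : G, ∫⁻ x in H, ∏ j, ENNReal.ofReal (f j (σ j (g * x))) ∂μ ≤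
      C * ∏ j, eLpNorm (f j) (p j) (ν j) := by
    intro g
    set f' : ∀ j, K j → ℝ := fun j z => f j (σ j g * z)
    have hf'_norm : ∀ j, eLpNorm (f' j) (p j) ((ν j).comap (↑)) ≤ eLpNorm (f j) (p j) (ν j) := by
      intro j
      rw [← eLpNorm_comp_mul_left (μ := ν j) (f j) (σ j g)]
      exact (eLpNorm_comp_subtype_val (hK j).measurableSet (fun x => f j (σ j g * x))).trans_le
        (eLpNorm_mono_measure _ Measure.restrict_le_self)
    have hf' := hC f' (fun j => (hfc j).comp (continuous_const.mul continuous_subtype_val))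
      (fun j => (hfs j).comp_isClosedEmbedding
        ((Homeomorph.mulLeft _).isClosedEmbedding.comp (hK j).isClosedEmbedding_subtypeVal))
      (fun j z => hfnn j _)
    calc ∫⁻ x in H, ∏ j, ENNReal.ofReal (f j (σ j (g * x))) ∂μ
        = ∫⁻ y : H, ∏ j, ENNReal.ofReal (f' j (φ j y)) ∂(μ.comap (↑)) := by
          rw [← lintegral_subtype_comap hH]
          simp only [f', hφ, map_mul]
          rfl
      _ ≤ C * ∏ j, eLpNorm (f' j) (p j) ((ν j).comap (↑)) := hf'
      _ ≤ C * ∏ j, eLpNorm (f j) (p j) (ν j) := by gcongr with j; exact hf'_norm j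
  calc ∫⁻ x, ∏ j, ENNReal.ofReal (f j (σ j x)) ∂μ
      ≤ ∑ q : G ⧸ H, ∫⁻ x in H, ∏ j, ENNReal.ofReal (f j (σ j (q.out * x))) ∂μ :=
        lintegral_le_sum_setLIntegral_subgroup H _
    _ ≤ ∑ _q : G ⧸ H, C * ∏ j, eLpNorm (f j) (p j) (ν j) :=
        Finset.sum_le_sum fun q _ => hcoset q.out
    _ = Nat.card (G ⧸ H) * C * ∏ j, eLpNorm (f j) (p j) (ν j) := by
        rw [Finset.sum_const, nsmul_eq_mul, Finset.card_univ, Nat.card_eq_fintype_card, mul_assoc]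

end Subgroups

section OpenSubgroups

variable {J : Type*} [Fintype J]
  {G : Type*} [Group G] [TopologicalSpace G] [IsTopologicalGroup G] [CompactSpace G]
  [MeasurableSpace G] [OpensMeasurableSpace G] [MeasurableMul G]
  {Gj : J → Type*} [∀ j, Group (Gj j)] [∀ j, TopologicalSpace (Gj j)]
  [∀ j, IsTopologicalGroup (Gj j)] [∀ j, T2Space (Gj j)] [∀ j, MeasurableSpace (Gj j)]
  [∀ j, OpensMeasurableSpace (Gj j)] [∀ j, MeasurableMul (Gj j)]

theorem BLConst_lt_top_iff_comap_of_isOpen (μ : Measure G) [μ.IsMulLeftInvariant]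
    (ν : ∀ j, Measure (Gj j)) [∀ j, (ν j).IsMulLeftInvariant] (σ : ∀ j, G →* Gj j)
    (p : J → ℝ≥0∞) {H : Subgroup G} (hH : IsOpen (H : Set G)) {K : ∀ j, Subgroup (Gj j)}
    (hK : ∀ j, IsOpen (K j : Set (Gj j))) {φ : ∀ j, H → K j}
    (hφ : ∀ j x, (φ j x : Gj j) = σ j x) :
    BLConst μ ν (fun j => σ j) p < ∞ ↔
      BLConst (μ.comap (↑)) (fun j => (ν j).comap (↑)) φ p < ∞ := by
  have := Subgroup.quotient_finite_of_isOpen H hH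
  simp only [BLConst_lt_top_iff]
  constructor
  · rintro ⟨C, hC, hC_lt⟩
    exact ⟨C, hC.comap_subtype hH.measurableSet hK hφ, hC_lt⟩
  · rintro ⟨C, hC, hC_lt⟩
    exact ⟨_, hC.of_comap_subgroup hH.measurableSet
      (fun j => (K j).isClosed_of_isOpen (hK j)) hφ,
      ENNReal.mul_lt_top (ENNReal.natCast_lt_top _) hC_lt⟩

end OpenSubgroups

theorem BLConst_lt_top_iff_identityComponent_general
    {J : Type*} [Fintype J]
    {Gj : J → Type*} [∀ j, Group (Gj j)] [∀ j, TopologicalSpace (Gj j)]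
    [∀ j, IsTopologicalGroup (Gj j)] [∀ j, T2Space (Gj j)] [∀ j, CompactSpace (Gj j)]
    {E : J → Type*} [∀ j, NormedAddCommGroup (E j)] [∀ j, NormedSpace ℝ (E j)]
    [∀ j, FiniteDimensional ℝ (E j)] [∀ j, ChartedSpace (E j) (Gj j)]
    [∀ j, MeasurableSpace (Gj j)] [∀ j, BorelSpace (Gj j)]
    (ν : ∀ j, Measure (Gj j)) [∀ j, (ν j).IsHaarMeasure]
    (G : Subgroup (∀ j, Gj j)) [CompactSpace G]
    {F : Type*} [NormedAddCommGroup F] [NormedSpace ℝ F] [ChartedSpace F G]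
    (μ : Measure G) [μ.IsHaarMeasure]
    (p : J → ℝ≥0∞)
    (μe : Measure (Subgroup.connectedComponentOfOne G)) [μe.IsHaarMeasure]
    (νe : ∀ j, Measure (Subgroup.connectedComponentOfOne (Gj j)))
    [∀ j, (νe j).IsHaarMeasure]
    (φ : ∀ j, (Subgroup.connectedComponentOfOne G) →
      (Subgroup.connectedComponentOfOne (Gj j)))
    (hφ : ∀ j x, ((φ j x : Gj j)) = ((x : G) : ∀ j, Gj j) j) :
    BLConst μ ν (fun j => fun x : G => (x : ∀ j, Gj j) j) p < ∞ ↔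
      BLConst μe νe φ p < ∞ := by
  have := ChartedSpace.locallyConnectedSpace F G
  have := fun j => ChartedSpace.locallyConnectedSpace (E j) (Gj j)
  have := fun j => ChartedSpace.secondCountable_of_sigmaCompact (E j) (Gj j)
  have : SecondCountableTopology G :=
    TopologicalSpace.Subtype.secondCountableTopology (G : Set (∀ j, Gj j))
  have : SecondCountableTopology (Subgroup.connectedComponentOfOne G) :=
    TopologicalSpace.Subtype.secondCountableTopology (connectedComponent (1 : G))
  have : ∀ j, SecondCountableTopology (Subgroup.connectedComponentOfOne (Gj j)) := fun j =>
    TopologicalSpace.Subtype.secondCountableTopology (connectedComponent (1 : Gj j))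
  have : CompactSpace (Subgroup.connectedComponentOfOne G) :=
    isCompact_iff_compactSpace.mp isClosed_connectedComponent.isCompact
  have : ∀ j, CompactSpace (Subgroup.connectedComponentOfOne (Gj j)) := fun j =>
    isCompact_iff_compactSpace.mp isClosed_connectedComponent.isCompact
  have := isHaarMeasure_comap_subtype_of_isOpen μ
    (H := Subgroup.connectedComponentOfOne G) isOpen_connectedComponent
  have := fun j => isHaarMeasure_comap_subtype_of_isOpen (ν j)
    (H := Subgroup.connectedComponentOfOne (Gj j)) isOpen_connectedComponent
  exact (BLConst_lt_top_iff_comap_of_isOpen μ ν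
    (fun j => (Pi.evalMonoidHom Gj j).comp G.subtype) p isOpen_connectedComponent
    (fun j => isOpen_connectedComponent) hφ).trans
    (BLConst_lt_top_iff_of_isHaarMeasure _ μe _ νe)

/-- **Reduction to identity components for compact Lie groups.**
Let `(G, σ, p)` be a canonical Brascamp–Lieb datum of compact Lie groups, and for each `j` let
`φ j` be the restriction of `σ j` to the identity component `G_e` of `G`, with codomain the
identity component `(Gj j)_e` of `Gj j`. Then `BL(G, σ, p)` is finite if and only if
`BL(G_e, φ, p)` is finite, for any choice of Haar measures on the groups involved. -/
theorem BLConst_lt_top_iff_identityComponent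
    {J : Type*} [Fintype J]
    {Gj : J → Type*} [∀ j, Group (Gj j)] [∀ j, TopologicalSpace (Gj j)]
    [∀ j, IsTopologicalGroup (Gj j)] [∀ j, T2Space (Gj j)] [∀ j, CompactSpace (Gj j)]
    {E : J → Type*} [∀ j, NormedAddCommGroup (E j)] [∀ j, NormedSpace ℝ (E j)]
    [∀ j, FiniteDimensional ℝ (E j)]
    [∀ j, ChartedSpace (E j) (Gj j)] [∀ j, LieGroup 𝓘(ℝ, E j) (⊤ : ℕ∞) (Gj j)]
    [∀ j, MeasurableSpace (Gj j)] [∀ j, BorelSpace (Gj j)]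
    (ν : ∀ j, Measure (Gj j)) [∀ j, (ν j).IsHaarMeasure]
    (G : Subgroup (∀ j, Gj j)) (hGclosed : IsClosed (G : Set (∀ j, Gj j)))
    [CompactSpace G]
    {F : Type*} [NormedAddCommGroup F] [NormedSpace ℝ F] [FiniteDimensional ℝ F]
    [ChartedSpace F G] [LieGroup 𝓘(ℝ, F) (⊤ : ℕ∞) G]
    (μ : Measure G) [μ.IsHaarMeasure]
    (p : J → ℝ≥0∞) (hp : ∀ j, 1 ≤ p j)
    (μe : Measure (Subgroup.connectedComponentOfOne G)) [μe.IsHaarMeasure]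
    (νe : ∀ j, Measure (Subgroup.connectedComponentOfOne (Gj j)))
    [∀ j, (νe j).IsHaarMeasure]
    (φ : ∀ j, (Subgroup.connectedComponentOfOne G) →
      (Subgroup.connectedComponentOfOne (Gj j)))
    (hφ : ∀ j x, ((φ j x : Gj j)) = ((x : G) : ∀ j, Gj j) j) :
    BLConst μ ν (fun j => fun x : G => (x : ∀ j, Gj j) j) p < ∞ ↔
      BLConst μe νe φ p < ∞ :=
  BLConst_lt_top_iff_identityComponent_general (E := E) ν G (F := F) μ p μe νe φ hφ

end
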